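/- Let V be a finite-dimensional F-vector space and let Q̃ : (F×V)* → F be a quadratic form. Then for all s ∈ F with s ≠ 0 and s ≠ 1, and every non-identical translation γ : x ↦ x + t (t ≠ 0) of V, the mapping s·γ^β, where γ^β(a₀,a*) = (a₀ − ⟨a*,t⟩, a*), does not belong to the weak orthogonal group O'((F×V)*, Q̃). -/

import Mathlib

/-! Setting: a field `F` and a finite-dimensional `F`-vector space `V`. The dual of
`F × V` is identified with `F × V*` via the pairing `⟨(a₀,a*),(x₀,x)⟩ = a₀x₀ + ⟨a*,x⟩`.
For a quadratic form `Q`, its polar form is `QuadraticMap.polar Q` (the bilinear map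
`Q.polarBilin`) and its radical is `LinearMap.ker Q.polarBilin`. -/

variable {F V : Type*} [Field F] [AddCommGroup V] [Module F V] [FiniteDimensional F V]

/-- The dual linear representation `β` of `AGL(V)` on `(F×V)* = F × V*`: for the affinity
`γ : x ↦ t + g x` (with `g ∈ GL(V)`, `t ∈ V`),
`γ^β (a₀, a*) = (a₀ - ⟨a* ∘ g⁻¹, t⟩, a* ∘ g⁻¹)`. -/
def betaMap (g : V ≃ₗ[F] V) (t : V) :
    (F × Module.Dual F V) →ₗ[F] (F × Module.Dual F V) :=
  LinearMap.prod
    (LinearMap.fst F F (Module.Dual F V) -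
      (Module.Dual.eval F V (g.symm t)).comp (LinearMap.snd F F (Module.Dual F V)))
    ((g.symm.toLinearMap.dualMap).comp (LinearMap.snd F F (Module.Dual F V)))

/-- Given a quadratic form `Q` on `V` whose induced map `D = Q.polarBilin` is bijective
(given here as the linear equivalence `e` with `↑e = Q.polarBilin`), the quadratic form
`Q^↑ : F × V* → F, (a₀, a*) ↦ Q (D⁻¹ a*)`. -/
def qUp (Q : QuadraticForm F V) (e : V ≃ₗ[F] Module.Dual F V) :
    QuadraticForm F (F × Module.Dual F V) :=
  Q.comp (e.symm.toLinearMap ∘ₗ LinearMap.snd F F (Module.Dual F V))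

/-- Given a quadratic form `Q̃` on `F × V*` such that `π ∘ D̃ ∘ π^T : V* → V` is invertible
(given here as the linear equivalence `T`, characterised by
`∀ a b, b (T a) = polar Q̃ (0,a) (0,b)`), the quadratic form
`Q̃^↓ : V → F, x ↦ Q̃ (0, T⁻¹ x)`. -/
def qDown (Qt : QuadraticForm F (F × Module.Dual F V)) (T : Module.Dual F V ≃ₗ[F] V) :
    QuadraticForm F V :=
  Qt.comp ((LinearMap.inr F F (Module.Dual F V)) ∘ₗ T.symm.toLinearMap)

/-- The weak orthogonal group `O'(W,Q)` of a metric vector space, as a set of linear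
endomorphisms: bijective isometries fixing the radical elementwise. -/
def wOrth {W : Type*} [AddCommGroup W] [Module F W] (Qt : QuadraticForm F W) :
    Set (W →ₗ[F] W) :=
  {φ | Function.Bijective φ ∧ (∀ w, Qt (φ w) = Qt w) ∧
    ∀ w ∈ LinearMap.ker Qt.polarBilin, φ w = w}

/-- The `β`-image `AO(V,Q)^β` of the motion group of `(V,Q)`. -/
def motionBetaSet (Q : QuadraticForm F V) :
    Set ((F × Module.Dual F V) →ₗ[F] (F × Module.Dual F V)) :=
  {φ | ∃ (g : V ≃ₗ[F] V) (t : V), (∀ x, Q (g x) = Q x) ∧ φ = betaMap g t}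

/-- The `β`-image `AO'(V,Q)^β` of the weak motion group of `(V,Q)`. -/
def wMotionBetaSet (Q : QuadraticForm F V) :
    Set ((F × Module.Dual F V) →ₗ[F] (F × Module.Dual F V)) :=
  {φ | ∃ (g : V ≃ₗ[F] V) (t : V), (∀ x, Q (g x) = Q x) ∧
    (∀ x ∈ LinearMap.ker Q.polarBilin, g x = x) ∧ φ = betaMap g t}

/-!
On `F × V*` the map `γ^β` of the translation by `t` is the transvection `w ↦ w + f(w) • u`
with `u = (1, 0)` and `f (a₀, a*) = -a*(t)`, a nonzero functional vanishing at `u`. If `s • γ^β`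
preserves `Q̃`, it preserves its polar form `b`, and this forces `u` into the radical: for
`s² ≠ 1` already by comparing `b(u, y)` with `b(s u, s γ^β y)`, and for `s = -1` (so that
`2 ≠ 0`) because then the transvection itself preserves `b`. But `s • γ^β` sends `u` to
`s • u ≠ u`, so it does not fix the radical.
-/

namespace QuadraticMap

open LinearMap

variable {K W : Type*} [Field K] [AddCommGroup W] [Module K W]

theorem polar_transvection_transvection (Q : QuadraticForm K W) (f : Module.Dual K W)
    (v x y : W) :
    polar Q (transvection f v x) (transvection f v y) =
      polar Q x y + f y * polar Q x v + f x * polar Q v y + f x * f y * polar Q v v := by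
  simp only [transvection.apply, polar_add_left, polar_add_right, polar_smul_left,
    polar_smul_right, smul_eq_mul]
  ring

theorem mem_ker_polarBilin_of_polar_smul_transvection_of_sq_ne_one (Q : QuadraticForm K W)
    {f : Module.Dual K W} {v : W} (hfv : f v = 0) {s : K} (hs : s ^ 2 ≠ 1)
    (h : ∀ y, polar Q (s • v) (s • transvection f v y) = polar Q v y) :
    v ∈ ker Q.polarBilin := by
  have hsq : s ^ 2 - 1 ≠ 0 := sub_ne_zero.mpr hs
  have key (y : W) : (s ^ 2 - 1) * polar Q v y + s ^ 2 * f y * polar Q v v = 0 := by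
    have := h y
    simp only [polar_smul_left, polar_smul_right, transvection.apply, polar_add_right,
      smul_eq_mul] at this
    linear_combination this
  have hvv : polar Q v v = 0 := by
    simpa [hfv, hsq] using key v
  refine LinearMap.mem_ker.mpr (LinearMap.ext fun y => ?_)
  simpa [hvv, hsq] using key y

theorem mem_ker_polarBilin_of_polar_transvection (Q : QuadraticForm K W)
    {f : Module.Dual K W} {v : W} (hfv : f v = 0) (hf : f ≠ 0) (h2 : (2 : K) ≠ 0)
    (h : ∀ x y, polar Q (transvection f v x) (transvection f v y) = polar Q x y) :
    v ∈ ker Q.polarBilin := by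
  have key (x y : W) :
      f y * polar Q x v + f x * polar Q v y + f x * f y * polar Q v v = 0 := by
    linear_combination h x y - polar_transvection_transvection Q f v x y
  obtain ⟨z, hz⟩ : ∃ z, f z ≠ 0 := by
    by_contra! hzero
    exact hf (LinearMap.ext hzero)
  have hvv : polar Q v v = 0 := by
    simpa [hfv, hz] using key v z
  have hvz : polar Q v z = 0 := by
    have := key z z
    rw [polar_comm Q z v, hvv] at this
    have : 2 * f z * polar Q v z = 0 := by linear_combination this
    simpa [h2, hz] using this
  refine LinearMap.mem_ker.mpr (LinearMap.ext fun y => ?_)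
  have := key z y
  rw [polar_comm Q z v, hvz, hvv] at this
  simpa [hz] using this

theorem mem_ker_polarBilin_of_polar_smul_transvection (Q : QuadraticForm K W)
    {f : Module.Dual K W} {v : W} (hfv : f v = 0) (hf : f ≠ 0) {s : K} (hs1 : s ≠ 1)
    (h : ∀ x y, polar Q (s • transvection f v x) (s • transvection f v y) = polar Q x y) :
    v ∈ ker Q.polarBilin := by
  by_cases hsq : s ^ 2 = 1
  · have hs : s = -1 := (sq_eq_one_iff.mp hsq).resolve_left hs1
    refine mem_ker_polarBilin_of_polar_transvection Q hfv hf ?_ fun x y => ?_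
    · intro h2
      exact hs1 (by linear_combination hs - h2)
    · rw [← h x y, polar_smul_left, polar_smul_right, smul_smul, ← pow_two, hsq, one_smul]
  · refine mem_ker_polarBilin_of_polar_smul_transvection_of_sq_ne_one Q hfv hsq fun y => ?_
    simpa [transvection.apply, hfv] using h v y

theorem polar_map_map_of_forall_map_eq (Q : QuadraticForm K W) {φ : W →ₗ[K] W}
    (hφ : ∀ w, Q (φ w) = Q w) (x y : W) : polar Q (φ x) (φ y) = polar Q x y := by
  simp only [polar, ← map_add, hφ]

end QuadraticMap

theorem betaMap_refl {K U : Type*} [Field K] [AddCommGroup U] [Module K U] (t : U) :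
    betaMap (LinearEquiv.refl K U) t =
      LinearMap.transvection (-(Module.Dual.eval K U t ∘ₗ LinearMap.snd K K _)) (1, 0) := by
  ext w <;> simp [betaMap, LinearMap.transvection.apply, sub_eq_add_neg]

theorem stmt17_general (Qt : QuadraticForm F (F × Module.Dual F V))
    (s : F) (hs1 : s ≠ 1) (t : V) (ht : t ≠ 0) :
    s • betaMap (LinearEquiv.refl F V) t ∉ wOrth Qt := by
  rintro ⟨-, hiso, hrad⟩
  set f : Module.Dual F (F × Module.Dual F V) :=
    -(Module.Dual.eval F V t ∘ₗ LinearMap.snd F F _)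
  have hfu : f (1, 0) = 0 := by simp [f]
  have hf : f ≠ 0 := by
    obtain ⟨g, hg⟩ : ∃ g : Module.Dual F V, g t ≠ 0 := by
      by_contra! h
      exact ht ((Module.forall_dual_apply_eq_zero_iff F t).mp h)
    exact fun h0 => hg (by simpa [f] using LinearMap.congr_fun h0 (0, g))
  rw [betaMap_refl] at hiso hrad
  have hrad_u := QuadraticMap.mem_ker_polarBilin_of_polar_smul_transvection Qt hfu hf hs1
    (QuadraticMap.polar_map_map_of_forall_map_eq Qt hiso)
  have hfix := congrArg Prod.fst (hrad _ hrad_u)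
  simp [LinearMap.transvection.apply] at hfix
  exact hs1 hfix

/-- Corollary 5.10: for every `s ∈ F \ {0,1}` and every non-identical translation
`γ : x ↦ x + t` (`t ≠ 0`), the map `s • γ^β` does not belong to `O'((F×V)*, Q̃)`. -/
theorem stmt17 (Qt : QuadraticForm F (F × Module.Dual F V))
    (s : F) (hs0 : s ≠ 0) (hs1 : s ≠ 1) (t : V) (ht : t ≠ 0) :
    s • betaMap (LinearEquiv.refl F V) t ∉ wOrth Qt :=
  stmt17_general Qt s hs1 t ht
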